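/- arXiv:1908.01935 — 4 statements merged into one kernel-verified Lean document; each statement's English description precedes it below -/
import Mathlib

section
/- Let X be a nonzero complex Hilbert space and let A be a bounded linear operator on X that is hypercyclic. Then the residual spectrum of A is empty: there is no λ ∈ ℂ such that A − λI is injective and the range of A − λI is not dense in X. -/
/-!
If the range of `A - λ` is not dense, Hahn–Banach gives a nonzero functional `φ` vanishing on it,
i.e. `φ ∘ A = λ • φ`, so `φ (Aⁿ f) = λⁿ φ f`. Being surjective and continuous, `φ` maps the dense
orbit of `f` onto a dense subset of the scalars. But the sequence `λⁿ c` is bounded when `|λ| ≤ 1`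
or `c = 0`, and otherwise never enters the disc of radius `|c|` about `0`.
-/

open Bornology Metric

theorem not_denseRange_pow_mul {𝕜 : Type*} [NontriviallyNormedField 𝕜] (l c : 𝕜) :
    ¬ DenseRange fun n : ℕ => l ^ n * c := by
  intro hd
  by_cases hbdd : c = 0 ∨ ‖l‖ ≤ 1
  · have hsub : Set.range (fun n : ℕ => l ^ n * c) ⊆ closedBall 0 ‖c‖ := by
      rintro _ ⟨n, rfl⟩
      rw [mem_closedBall_zero_iff, norm_mul, norm_pow]
      rcases hbdd with rfl | hl
      · simp
      · exact mul_le_of_le_one_left (norm_nonneg c) (pow_le_one₀ (norm_nonneg l) hl)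
    have := (isBounded_closedBall.subset hsub).closure
    rw [hd.closure_range] at this
    exact NormedSpace.unbounded_univ 𝕜 𝕜 this
  · obtain ⟨hc, hl⟩ : c ≠ 0 ∧ 1 < ‖l‖ := by simpa only [not_or, not_le] using hbdd
    obtain ⟨_, hball, n, rfl⟩ :=
      hd.inter_open_nonempty (ball 0 ‖c‖) isOpen_ball ⟨0, mem_ball_self (norm_pos_iff.mpr hc)⟩
    rw [mem_ball_zero_iff, norm_mul, norm_pow] at hball
    exact hball.not_ge (le_mul_of_one_le_left (norm_nonneg c) (one_le_pow₀ hl.le))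

theorem Submodule.exists_surjective_strongDual_of_not_dense {𝕜 E : Type*} [RCLike 𝕜]
    [NormedAddCommGroup E] [NormedSpace 𝕜 E] (p : Submodule 𝕜 E) (hp : ¬ Dense (p : Set E)) :
    ∃ φ : StrongDual 𝕜 E, Function.Surjective φ ∧ ∀ x ∈ p, φ x = 0 := by
  obtain ⟨x, hx⟩ : ∃ x, x ∉ p.topologicalClosure := by
    simpa [dense_iff_closure_eq, ← Submodule.topologicalClosure_coe, Set.eq_univ_iff_forall]
      using hp
  -- makes the quotient by the closure a normed space, whose dual separates points
  have : IsClosed (p.topologicalClosure : Set E) := p.isClosed_topologicalClosure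
  obtain ⟨ψ, hψ⟩ := SeparatingDual.exists_eq_one (R := 𝕜)
    (mt (Submodule.Quotient.mk_eq_zero _).mp hx)
  refine ⟨ψ.comp p.topologicalClosure.mkQL, fun z => ⟨z • x, ?_⟩, fun y hy => ?_⟩
  · simp [hψ]
  · simp [(Submodule.Quotient.mk_eq_zero _).mpr (p.le_topologicalClosure hy)]

section Orbit

variable {𝕜 E : Type*} [RCLike 𝕜] [NormedAddCommGroup E] [NormedSpace 𝕜 E]

theorem StrongDual.apply_pow_apply_eq_pow_mul {φ : StrongDual 𝕜 E} {A : E →L[𝕜] E} {l : 𝕜}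
    (h : ∀ x, φ (A x) = l * φ x) (n : ℕ) (x : E) : φ ((A ^ n) x) = l ^ n * φ x := by
  induction n with
  | zero => simp
  | succ n ih =>
    rw [pow_succ', pow_succ', mul_assoc, ← ih]
    exact h _

theorem dense_range_sub_smul_of_denseRange_pow_apply {A : E →L[𝕜] E} {f : E}
    (hf : DenseRange fun n : ℕ => (A ^ n) f) (l : 𝕜) :
    Dense (Set.range fun x : E => A x - l • x) := by
  by_contra hnd
  obtain ⟨φ, hφ, hker⟩ := Submodule.exists_surjective_strongDual_of_not_dense
    (LinearMap.range ((A - l • 1 : E →L[𝕜] E) : E →ₗ[𝕜] E)) hnd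
  have heig : ∀ x, φ (A x) = l * φ x := fun x => by
    simpa [sub_eq_zero] using hker _ ⟨x, rfl⟩
  have hdense : DenseRange fun n : ℕ => l ^ n * φ f := by
    convert hφ.denseRange.comp hf φ.continuous using 1
    ext n
    exact (StrongDual.apply_pow_apply_eq_pow_mul heig n f).symm
  exact not_denseRange_pow_mul l (φ f) hdense

end Orbit

theorem residual_spectrum_empty_of_hypercyclic_general {X : Type*} [NormedAddCommGroup X]
    [InnerProductSpace ℂ X]
    (A : X →L[ℂ] X) (hhyp : ∃ f : X, DenseRange (fun n : ℕ => (A ^ n) f)) :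
    ¬ ∃ l : ℂ, Function.Injective (fun x : X => A x - l • x) ∧
        ¬ Dense (Set.range fun x : X => A x - l • x) := by
  rintro ⟨l, -, hnd⟩
  obtain ⟨f, hf⟩ := hhyp
  exact hnd (dense_range_sub_smul_of_denseRange_pow_apply hf l)

/-- A hypercyclic bounded linear operator on a nonzero complex Hilbert space has empty
residual spectrum. -/
theorem residual_spectrum_empty_of_hypercyclic {X : Type*} [NormedAddCommGroup X]
    [InnerProductSpace ℂ X] [CompleteSpace X] [Nontrivial X]
    (A : X →L[ℂ] X) (hhyp : ∃ f : X, DenseRange (fun n : ℕ => (A ^ n) f)) :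
    ¬ ∃ l : ℂ, Function.Injective (fun x : X => A x - l • x) ∧
        ¬ Dense (Set.range fun x : X => A x - l • x) :=
  residual_spectrum_empty_of_hypercyclic_general A hhyp
end

section
/- Let X be a nonzero complex Hilbert space and let A be a (possibly unbounded) symmetric linear operator in X, given as a linear map A defined on a subspace D(A) ⊆ X satisfying ⟨Ax, y⟩ = ⟨x, Ay⟩ for all x, y ∈ D(A). Then A is not hypercyclic: there is no sequence (uₙ)_{n∈ℕ} in X with uₙ ∈ D(A) and A uₙ = u_{n+1} for all n ∈ ℕ, such that the set {uₙ : n ∈ ℕ} is dense in X. -/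
open scoped InnerProductSpace

/-!
Symmetry gives `⟪u (n + 2), u n⟫ = ‖u (n + 1)‖ ^ 2` along an orbit, so by Cauchy–Schwarz the
norms of the orbit form a log-convex sequence. Once such a sequence increases it keeps
increasing, so it is either nonincreasing, hence bounded, or eventually bounded below by a
positive constant. A dense orbit excludes both: its norms are unbounded, and infinitely many
of its points lie in any ball around `0`.
-/

open Set

lemma lt_of_sq_le_mul_of_lt {x y z : ℝ} (hx : 0 ≤ x) (hsq : y ^ 2 ≤ z * x) (hxy : x < y) :
    y < z := by
  nlinarith

lemma antitone_or_exists_pos_le_of_sq_le_mul {a : ℕ → ℝ} (h0 : ∀ n, 0 ≤ a n)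
    (hconv : ∀ n, a (n + 1) ^ 2 ≤ a (n + 2) * a n) :
    Antitone a ∨ ∃ N, 0 < a N ∧ ∀ n, N ≤ n → a N ≤ a n := by
  by_cases hanti : ∀ n, a (n + 1) ≤ a n
  · exact .inl (antitone_nat_of_succ_le hanti)
  push Not at hanti
  obtain ⟨N, hN⟩ := hanti
  have hinc : ∀ n, N ≤ n → a n < a (n + 1) :=
    Nat.le_induction hN fun n _ ih => lt_of_sq_le_mul_of_lt (h0 n) (hconv n) ih
  refine .inr ⟨N + 1, (h0 N).trans_lt hN, Nat.le_induction le_rfl fun n _ ih => ?_⟩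
  exact ih.trans (hinc n (by omega)).le

section Orbit

variable {𝕜 E : Type*} [RCLike 𝕜] [NormedAddCommGroup E] [InnerProductSpace 𝕜 E]
  {A : E →ₗ.[𝕜] E} {u : ℕ → E} (hmem : ∀ n, u n ∈ A.domain)

lemma inner_orbit_succ_left (hsymm : ∀ x y : A.domain, ⟪A x, (y : E)⟫_𝕜 = ⟪(x : E), A y⟫_𝕜)
    (hrec : ∀ n, A ⟨u n, hmem n⟩ = u (n + 1)) (m n : ℕ) :
    ⟪u (m + 1), u n⟫_𝕜 = ⟪u m, u (n + 1)⟫_𝕜 := by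
  simpa only [hrec] using hsymm ⟨u m, hmem m⟩ ⟨u n, hmem n⟩

lemma norm_orbit_succ_sq_le (hsymm : ∀ x y : A.domain, ⟪A x, (y : E)⟫_𝕜 = ⟪(x : E), A y⟫_𝕜)
    (hrec : ∀ n, A ⟨u n, hmem n⟩ = u (n + 1)) (n : ℕ) :
    ‖u (n + 1)‖ ^ 2 ≤ ‖u (n + 2)‖ * ‖u n‖ :=
  calc ‖u (n + 1)‖ ^ 2 = RCLike.re ⟪u (n + 1), u (n + 1)⟫_𝕜 := (inner_self_eq_norm_sq _).symm
    _ = RCLike.re ⟪u (n + 2), u n⟫_𝕜 :=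
      congrArg _ (inner_orbit_succ_left hmem hsymm hrec (n + 1) n).symm
    _ ≤ ‖⟪u (n + 2), u n⟫_𝕜‖ := RCLike.re_le_norm _
    _ ≤ ‖u (n + 2)‖ * ‖u n‖ := norm_inner_le_norm _ _

end Orbit

lemma DenseRange.dense_image_Ici {α : Type*} [TopologicalSpace α] [T1Space α] [PerfectSpace α]
    {u : ℕ → α} (hu : DenseRange u) (N : ℕ) : Dense (u '' Ici N) := by
  refine (hu.sdiff_finite ((finite_Iio N).image u)).mono ?_
  rintro _ ⟨⟨k, rfl⟩, hk⟩
  exact ⟨k, mem_Ici.2 <| not_lt.mp fun hkN => hk ⟨k, hkN, rfl⟩, rfl⟩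

lemma DenseRange.exists_lt_norm (𝕜 : Type*) {E : Type*} [NontriviallyNormedField 𝕜]
    [NormedAddCommGroup E] [NormedSpace 𝕜 E] [Nontrivial E] {u : ℕ → E} (hu : DenseRange u)
    (R : ℝ) : ∃ n, R < ‖u n‖ := by
  by_contra! hle
  apply NormedSpace.unbounded_univ 𝕜 E
  rw [← hu.closure_range]
  exact (isBounded_iff_forall_norm_le.2 ⟨R, by rintro _ ⟨n, rfl⟩; exact hle n⟩).closure

theorem symmetric_not_hypercyclic_general {X : Type*} [NormedAddCommGroup X] [InnerProductSpace ℂ X]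
    [Nontrivial X] (A : X →ₗ.[ℂ] X)
    (hsymm : ∀ x y : A.domain, ⟪A x, (y : X)⟫_ℂ = ⟪(x : X), A y⟫_ℂ) :
    ¬ ∃ (u : ℕ → X) (hmem : ∀ n, u n ∈ A.domain),
        (∀ n, A ⟨u n, hmem n⟩ = u (n + 1)) ∧ DenseRange u := by
  rintro ⟨u, hmem, hrec, hdense⟩
  have : PerfectSpace X := perfectSpace_of_module ℂ X
  rcases antitone_or_exists_pos_le_of_sq_le_mul (fun n => norm_nonneg (u n))
      (norm_orbit_succ_sq_le hmem hsymm hrec) with hanti | ⟨N, hpos, hge⟩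
  · obtain ⟨n, hn⟩ := hdense.exists_lt_norm ℂ ‖u 0‖
    exact hn.not_ge (hanti n.zero_le)
  · obtain ⟨_, ⟨k, hk, rfl⟩, hsmall⟩ := (hdense.dense_image_Ici N).exists_mem_open
      Metric.isOpen_ball (Metric.nonempty_ball.2 hpos : (Metric.ball (0 : X) ‖u N‖).Nonempty)
    exact (mem_ball_zero_iff.1 hsmall).not_ge (hge k hk)

/-- A (possibly unbounded) symmetric operator in a nonzero complex Hilbert space is not
hypercyclic. -/
theorem symmetric_not_hypercyclic {X : Type*} [NormedAddCommGroup X] [InnerProductSpace ℂ X]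
    [CompleteSpace X] [Nontrivial X] (A : X →ₗ.[ℂ] X)
    (hsymm : ∀ x y : A.domain, ⟪A x, (y : X)⟫_ℂ = ⟪(x : X), A y⟫_ℂ) :
    ¬ ∃ (u : ℕ → X) (hmem : ∀ n, u n ∈ A.domain),
        (∀ n, A ⟨u n, hmem n⟩ = u (n + 1)) ∧ DenseRange u :=
  symmetric_not_hypercyclic_general A hsymm
end

section
/- Let X be a nonzero complex Hilbert space and let A be a (possibly unbounded) densely defined self-adjoint operator in X, i.e., a linear map on a dense subspace D(A) ⊆ X that equals its Hilbert-space adjoint A*. Then A is not hypercyclic: there is no sequence (uₙ)_{n∈ℕ} in X with uₙ ∈ D(A) and A uₙ = u_{n+1} for all n ∈ ℕ, such that the set {uₙ : n ∈ ℕ} is dense in X. -/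
/-!
For a symmetric operator, `‖A x‖² = ⟪x, A² x⟫ ≤ ‖x‖ ‖A² x‖`, so the norms along an orbit form a
log-convex sequence. Such a sequence is either eventually zero, or nonincreasing, or eventually
nondecreasing and bounded away from zero. A dense orbit would need norms both arbitrarily large and
arbitrarily small, which none of the three allows.
-/

open Set Filter Finset

def IsLogConvexSeq (a : ℕ → ℝ) : Prop := ∀ n, a (n + 1) ^ 2 ≤ a n * a (n + 2)

namespace IsLogConvexSeq

variable {a : ℕ → ℝ}

theorem eq_zero_of_le (ha : IsLogConvexSeq a) {m : ℕ} (hm : a m = 0) : ∀ n ≥ m, a n = 0 := by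
  refine Nat.le_induction hm fun n _ hn => ?_
  have hsq := ha n
  rw [hn, zero_mul] at hsq
  exact pow_eq_zero_iff two_ne_zero |>.1 (hsq.antisymm (sq_nonneg _))

theorem le_succ_of_le (ha : IsLogConvexSeq a) (h0 : ∀ n, 0 ≤ a n) {N : ℕ}
    (hN : a N ≤ a (N + 1)) : ∀ n ≥ N, a n ≤ a (n + 1) := by
  refine Nat.le_induction hN fun n _ hn => ?_
  rcases (h0 (n + 1)).eq_or_lt with hzero | hpos
  · exact hzero ▸ h0 (n + 2)
  · nlinarith [ha n, mul_le_mul_of_nonneg_right hn (h0 (n + 2))]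

theorem exists_pos_le_of_not_bddAbove (ha : IsLogConvexSeq a) (h0 : ∀ n, 0 ≤ a n)
    (hunb : ¬BddAbove (Set.range a)) : ∃ ε > 0, ∀ n, ε ≤ a n := by
  have hpos : ∀ m, 0 < a m := fun m => (h0 m).lt_of_ne' fun hm => hunb <|
    (tendsto_atTop_of_eventually_const (ha.eq_zero_of_le hm)).bddAbove_range
  obtain ⟨N, hN⟩ : ∃ N, a N ≤ a (N + 1) := by
    by_contra! hdec
    exact hunb ⟨a 0, forall_mem_range.2 fun n =>
      antitone_nat_of_succ_le (fun k => (hdec k).le) (Nat.zero_le n)⟩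
  have hmono := monotoneOn_nat_Ici_of_le_succ (ha.le_succ_of_le h0 hN)
  refine ⟨(range (N + 1)).inf' nonempty_range_add_one a,
    (lt_inf'_iff _).2 fun i _ => hpos i, fun n => ?_⟩
  rcases le_or_gt n N with hn | hn
  · exact inf'_le _ (mem_range_succ_iff.2 hn)
  · exact (inf'_le _ (self_mem_range_succ N)).trans
      (hmono (mem_Ici.2 le_rfl) (mem_Ici.2 hn.le) hn.le)

end IsLogConvexSeq

open scoped InnerProductSpace

theorem LinearPMap.IsFormalAdjoint.norm_sq_le {𝕜 E : Type*} [RCLike 𝕜] [NormedAddCommGroup E]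
    [InnerProductSpace 𝕜 E] {A : E →ₗ.[𝕜] E} (hA : A.IsFormalAdjoint A) (x y : A.domain)
    (hxy : A x = y) : ‖(y : E)‖ ^ 2 ≤ ‖(x : E)‖ * ‖A y‖ :=
  calc ‖(y : E)‖ ^ 2 = ‖⟪A x, (y : E)⟫_𝕜‖ := by
        rw [hxy, inner_self_eq_norm_sq_to_K, norm_pow, RCLike.norm_ofReal, abs_norm]
    _ = ‖⟪(x : E), A y⟫_𝕜‖ := by rw [hA x y]
    _ ≤ ‖(x : E)‖ * ‖A y‖ := norm_inner_le_norm _ _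

theorem DenseRange.exists_norm_lt {E ι : Type*} [SeminormedAddCommGroup E] {u : ι → E}
    (hu : DenseRange u) {ε : ℝ} (hε : 0 < ε) : ∃ i, ‖u i‖ < ε := by
  simpa using hu.exists_dist_lt 0 hε

theorem DenseRange.not_bddAbove_norm {𝕜 E ι : Type*} [NontriviallyNormedField 𝕜]
    [NormedAddCommGroup E] [NormedSpace 𝕜 E] [Nontrivial E] {u : ι → E} (hu : DenseRange u) :
    ¬BddAbove (Set.range fun i => ‖u i‖) := by
  refine not_bddAbove_iff.2 fun c => ?_
  obtain ⟨x, hx⟩ := NormedSpace.exists_lt_norm 𝕜 E (c + 1)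
  obtain ⟨i, hi⟩ := hu.exists_dist_lt x one_pos
  refine ⟨_, mem_range_self i, ?_⟩
  linarith [norm_sub_norm_le x (u i), dist_eq_norm x (u i)]

/-- A (possibly unbounded) densely defined self-adjoint operator in a nonzero complex Hilbert
space is not hypercyclic. -/
theorem selfAdjoint_not_hypercyclic {X : Type*} [NormedAddCommGroup X] [InnerProductSpace ℂ X]
    [CompleteSpace X] [Nontrivial X] (A : X →ₗ.[ℂ] X)
    (hdense : Dense (A.domain : Set X)) (hsa : A.adjoint = A) :
    ¬ ∃ (u : ℕ → X) (hmem : ∀ n, u n ∈ A.domain),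
        (∀ n, A ⟨u n, hmem n⟩ = u (n + 1)) ∧ DenseRange u := by
  rintro ⟨u, hmem, hrec, hu⟩
  have hsymm : A.IsFormalAdjoint A := by simpa only [hsa] using A.adjoint_isFormalAdjoint hdense
  have hlog : IsLogConvexSeq fun n => ‖u n‖ := fun n => by
    simpa only [hrec (n + 1)] using
      hsymm.norm_sq_le ⟨u n, hmem n⟩ ⟨u (n + 1), hmem (n + 1)⟩ (hrec n)
  obtain ⟨ε, hε, hle⟩ :=
    hlog.exists_pos_le_of_not_bddAbove (fun n => norm_nonneg _) (hu.not_bddAbove_norm (𝕜 := ℂ))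
  obtain ⟨n, hn⟩ := hu.exists_norm_lt hε
  exact (hle n).not_gt hn
end

section
/- Let X be a nonzero complex Hilbert space and let A be a (possibly unbounded) densely defined linear operator in X that is hypercyclic, i.e., there is a sequence (uₙ)_{n∈ℕ} with uₙ ∈ D(A) and A uₙ = u_{n+1} for all n, whose range {uₙ : n ∈ ℕ} is dense in X. Then for every λ ∈ ℂ, the range {Ax − λx : x ∈ D(A)} of the operator A − λI is dense in X. -/
/-!
If `A - λ` had non-dense range, some `z ≠ 0` would be orthogonal to it, and then
`⟪z, uₙ⟫ = λⁿ ⟪z, u₀⟫`. Since `x ↦ ⟪z, x⟫` is continuous and onto `ℂ`, this geometric sequence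
would be dense in `ℂ`; but it is either bounded (`|λ| ≤ 1`) or bounded away from `0`.
-/

theorem not_denseRange_geometric {𝕜 : Type*} [NontriviallyNormedField 𝕜] (a c : 𝕜) :
    ¬DenseRange fun n : ℕ => a ^ n * c := by
  intro hd
  have eq_univ_of_range_subset {s : Set 𝕜} (hs : IsClosed s)
      (hsub : ∀ n : ℕ, a ^ n * c ∈ s) : s = Set.univ := by
    rw [← hs.closure_eq]
    exact (hd.mono (Set.range_subset_iff.2 hsub)).closure_eq
  by_cases hbounded : ‖a‖ ≤ 1 ∨ c = 0
  · have hball := eq_univ_of_range_subset (s := Metric.closedBall 0 ‖c‖) Metric.isClosed_closedBall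
      fun n => by
        rcases hbounded with ha | rfl
        · simpa [norm_pow] using
            mul_le_of_le_one_left (norm_nonneg c) (pow_le_one₀ (norm_nonneg a) ha)
        · simp
    obtain ⟨x, hx⟩ := NormedField.exists_lt_norm 𝕜 ‖c‖
    have : x ∈ Metric.closedBall 0 ‖c‖ := hball ▸ Set.mem_univ x
    simp only [Metric.mem_closedBall, dist_zero_right] at this
    linarith
  · obtain ⟨ha, hc⟩ := not_or.1 hbounded
    have hout := eq_univ_of_range_subset (s := {x | ‖c‖ ≤ ‖x‖})
      (isClosed_le continuous_const continuous_norm) fun n => by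
        simpa [norm_pow] using le_mul_of_one_le_left (norm_nonneg c) (one_le_pow₀ (not_le.1 ha).le)
    have : (0 : 𝕜) ∈ {x : 𝕜 | ‖c‖ ≤ ‖x‖} := hout ▸ Set.mem_univ 0
    simp only [Set.mem_ofPred_eq, norm_zero] at this
    exact hc (norm_le_zero_iff.1 this)

theorem LinearPMap.eq_zero_of_map_sub_smul_eq_zero_of_denseRange_orbit {𝕜 X : Type*}
    [NontriviallyNormedField 𝕜] [AddCommGroup X] [Module 𝕜 X] [TopologicalSpace X]
    (A : X →ₗ.[𝕜] X) (u : ℕ → X) (hmem : ∀ n, u n ∈ A.domain)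
    (hAu : ∀ n, A ⟨u n, hmem n⟩ = u (n + 1)) (hu : DenseRange u) (l : 𝕜) (f : X →L[𝕜] 𝕜)
    (hf : ∀ x : A.domain, f (A x - l • (x : X)) = 0) : f = 0 := by
  have hgeom : ∀ n, f (u n) = l ^ n * f (u 0) := by
    intro n
    induction n with
    | zero => simp
    | succ n ih =>
      have h := hf ⟨u n, hmem n⟩
      rw [hAu n, f.map_sub, f.map_smul, sub_eq_zero] at h
      rw [h, ih, smul_eq_mul, pow_succ', mul_assoc]
  by_contra hf0
  have hsurj : Function.Surjective f :=
    LinearMap.surjective (f := (f : X →ₗ[𝕜] 𝕜)) fun h => hf0 (ContinuousLinearMap.coe_injective h)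
  have hdense : DenseRange (f ∘ u) := hsurj.denseRange.comp hu f.continuous
  exact not_denseRange_geometric l (f (u 0)) (funext hgeom ▸ hdense)

theorem range_sub_smul_dense_of_hypercyclic_unbounded_general {X : Type*} [NormedAddCommGroup X]
    [InnerProductSpace ℂ X] [CompleteSpace X] (A : X →ₗ.[ℂ] X)
    (hhyp : ∃ (u : ℕ → X) (hmem : ∀ n, u n ∈ A.domain),
      (∀ n, A ⟨u n, hmem n⟩ = u (n + 1)) ∧ DenseRange u) :
    ∀ l : ℂ, Dense {y : X | ∃ x : A.domain, A x - l • (x : X) = y} := by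
  intro l
  obtain ⟨u, hmem, hAu, hu⟩ := hhyp
  let K := LinearMap.range (A.toFun - l • A.domain.subtype)
  change Dense (K : Set X)
  rw [Submodule.dense_iff_topologicalClosure_eq_top, Submodule.topologicalClosure_eq_top_iff,
    Submodule.eq_bot_iff]
  intro z hz
  have hfz : innerSL ℂ z = 0 :=
    A.eq_zero_of_map_sub_smul_eq_zero_of_denseRange_orbit u hmem hAu hu l (innerSL ℂ z)
      fun x => Submodule.inner_left_of_mem_orthogonal (LinearMap.mem_range_self _ x) hz
  simpa using congrArg (fun f => f z) hfz

/-- If a densely defined (possibly unbounded) linear operator in a nonzero complex Hilbert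
space is hypercyclic, then for every `λ ∈ ℂ` the range of `A - λI` is dense. -/
theorem range_sub_smul_dense_of_hypercyclic_unbounded {X : Type*} [NormedAddCommGroup X]
    [InnerProductSpace ℂ X] [CompleteSpace X] [Nontrivial X] (A : X →ₗ.[ℂ] X)
    (hdense : Dense (A.domain : Set X))
    (hhyp : ∃ (u : ℕ → X) (hmem : ∀ n, u n ∈ A.domain),
      (∀ n, A ⟨u n, hmem n⟩ = u (n + 1)) ∧ DenseRange u) :
    ∀ l : ℂ, Dense {y : X | ∃ x : A.domain, A x - l • (x : X) = y} :=
  range_sub_smul_dense_of_hypercyclic_unbounded_general A hhyp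
end
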